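/- arXiv:1606.08649 — 4 statements merged into one kernel-verified Lean document; each statement's English description precedes it below -/
import Mathlib

section
/- For a monoid M the following are equivalent: (i) M is a group, i.e. every element of M is invertible; (ii) M is a Mal'tsev object of the category Mon of monoids; (iii) M is a protomodular object of Mon, i.e. every point over M in Mon is stably strong. -/
open CategoryTheory CategoryTheory.Limits

universe v u

variable {C : Type u} [Category.{v} C]

/-- A cospan `(r, s)` is jointly strongly epimorphic: whenever both `r` and `s`
factor through a monomorphism `m`, the monomorphism `m` is an isomorphism. -/
def JointlyStronglyEpi {X Y A : C} (r : X ⟶ A) (s : Y ⟶ A) : Prop :=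
  ∀ ⦃M : C⦄ (m : M ⟶ A), Mono m →
    (∃ r' : X ⟶ M, r' ≫ m = r) → (∃ s' : Y ⟶ M, s' ≫ m = s) → IsIso m

/-- A point `(f, s)` over `B` is strong: for every `g : X ⟶ B`, the second
projection of the pullback of `f` along `g` together with `s` is a jointly
strongly epimorphic pair. -/
def IsStrongPoint [HasPullbacks C] {A B : C} (f : A ⟶ B) (s : B ⟶ A) : Prop :=
  ∀ ⦃X : C⦄ (g : X ⟶ B), JointlyStronglyEpi (pullback.snd g f) s

/-- A point `(f, s)` over `B` is stably strong: every pullback of it along a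
morphism `g : X ⟶ B` is a strong point. -/
def IsStablyStrongPoint [HasPullbacks C] {A B : C} (f : A ⟶ B) (s : B ⟶ A)
    (hs : s ≫ f = 𝟙 B) : Prop :=
  ∀ ⦃X : C⦄ (g : X ⟶ B),
    IsStrongPoint (pullback.fst g f)
      (pullback.lift (𝟙 X) (g ≫ s) (by simp [hs]))

/-- An object `Y` is a Mal'tsev object: for every pullback of split
epimorphisms over `Y`, the two induced sections are jointly strongly
epimorphic. -/
def IsMaltsevObject [HasPullbacks C] (Y : C) : Prop :=
  ∀ ⦃A X : C⦄ (f : A ⟶ Y) (s : Y ⟶ A) (g : X ⟶ Y) (t : Y ⟶ X)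
    (hs : s ≫ f = 𝟙 Y) (ht : t ≫ g = 𝟙 Y),
    JointlyStronglyEpi
      (pullback.lift (𝟙 A) (f ≫ t) (by simp [ht]) : A ⟶ pullback f g)
      (pullback.lift (g ≫ s) (𝟙 X) (by simp [hs]) : X ⟶ pullback f g)

/-- An object `Y` is protomodular: every point over `Y` is stably strong. -/
def IsProtomodularObject [HasPullbacks C] (Y : C) : Prop :=
  ∀ ⦃A : C⦄ (f : A ⟶ Y) (s : Y ⟶ A) (hs : s ≫ f = 𝟙 Y), IsStablyStrongPoint f s hs

/-- `f` is a regular epimorphism. -/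
def IsRegularEpi {X Y : C} (f : X ⟶ Y) : Prop := Nonempty (RegularEpi f)

/-- A commutative square `f' ≫ β = α ≫ f` of regular epimorphisms is a regular
pushout if the comparison morphism into the pullback of `β` and `f` is a
regular epimorphism. -/
def IsRegularPushout [HasPullbacks C] {A' A B' B : C}
    (α : A' ⟶ A) (f' : A' ⟶ B') (f : A ⟶ B) (β : B' ⟶ B)
    (w : f' ≫ β = α ≫ f) : Prop :=
  _root_.IsRegularEpi α ∧ _root_.IsRegularEpi β ∧ _root_.IsRegularEpi f' ∧ _root_.IsRegularEpi f ∧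
    _root_.IsRegularEpi (pullback.lift f' α w)

/-- `Y` is a strongly unital object. -/
def StronglyUnitalObject [HasPullbacks C] [HasBinaryProducts C] (Y : C) : Prop :=
  IsStablyStrongPoint (prod.fst : Y ⨯ Y ⟶ Y) (prod.lift (𝟙 Y) (𝟙 Y)) (by exact prod.lift_fst _ _)

/-- `Y` is a unital object. -/
def UnitalObject [HasPullbacks C] [HasBinaryProducts C] [HasZeroMorphisms C]
    (Y : C) : Prop :=
  IsStablyStrongPoint (prod.fst : Y ⨯ Y ⟶ Y) (prod.lift (𝟙 Y) 0) (by exact prod.lift_fst _ _)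

/-- `Y` is a subtractive object: for every split right punctual span
`(s, f, g, t)` over `Y`, the composite `ker(g) ≫ f` is a regular epimorphism. -/
def SubtractiveObject [HasZeroMorphisms C] [HasKernels C] (Y : C) : Prop :=
  ∀ ⦃X Z : C⦄ (s : X ⟶ Z) (f : Z ⟶ X) (g : Z ⟶ Y) (t : Y ⟶ Z),
    s ≫ f = 𝟙 X → t ≫ g = 𝟙 Y → t ≫ f = 0 →
    _root_.IsRegularEpi (kernel.ι g ≫ f)

/-!
If every element of `Y` is invertible, an element `(a, x)` of a pullback `A ×_Y X` of split
epimorphisms is the product of `(a, t (f a))` with `(s (g x'), x')` for `x' = t (f a)⁻¹ * x`,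
and similarly for the pullback of a point along any morphism; so both conditions hold.

Conversely, fix `m : Y`, adjoin a free letter `y` to `Y` and let `ev m : Y ⋆ ⟨y⟩ → Y`
substitute `m` for `y`, with the inclusion `Y → Y ⋆ ⟨y⟩` as section. Either condition
forces `(y, y)` into the submonoid of the kernel pair of `ev m` generated by its two
sections. That submonoid consists of the images of words in two letters `y₁, y₂` under the
substitutions `(y₁, y₂) ↦ (y, m)` and `(y₁, y₂) ↦ (m, y)`; a word sent to `y` by both is
`y₁ c y₂` or `y₂ c y₁` with `c * m = 1 = m * c`.
-/

def kernelPairSections {A B : Type*} [Monoid A] [Monoid B] (f : A →* B) (s : B →* A) :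
    Submonoid (A × A) :=
  MonoidHom.mrange ((MonoidHom.id A).prod (s.comp f)) ⊔
    MonoidHom.mrange ((s.comp f).prod (MonoidHom.id A))

/-- The free product of `M` with the free monoid on `L`, in normal form:
`⟨a₀, [(xₖ, aₖ), …, (x₁, a₁)]⟩` stands for `a₀ x₁ a₁ ⋯ xₖ aₖ`. The tail is stored in reverse
so that multiplication only changes the head of the list. -/
structure AdjoinLetters (M L : Type*) where
  head : M
  tail : List (L × M)

namespace AdjoinLetters

variable {M L : Type*} [Monoid M]

instance : One (AdjoinLetters M L) := ⟨⟨1, []⟩⟩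

instance : Mul (AdjoinLetters M L) where
  mul
    | ⟨a, []⟩, ⟨b, l⟩ => ⟨a * b, l⟩
    | ⟨a, (x, c) :: t⟩, ⟨b, l⟩ => ⟨a, l ++ (x, c * b) :: t⟩

@[simp] theorem one_def : (1 : AdjoinLetters M L) = ⟨1, []⟩ := rfl

@[simp] theorem mk_nil_mul (a b : M) (l : List (L × M)) :
    (⟨a, []⟩ : AdjoinLetters M L) * ⟨b, l⟩ = ⟨a * b, l⟩ := rfl

@[simp] theorem mk_cons_mul (a b c : M) (x : L) (t l : List (L × M)) :
    (⟨a, (x, c) :: t⟩ : AdjoinLetters M L) * ⟨b, l⟩ = ⟨a, l ++ (x, c * b) :: t⟩ := rfl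

instance : Monoid (AdjoinLetters M L) where
  one_mul := fun ⟨b, l⟩ => by simp
  mul_one := fun ⟨a, l⟩ => by rcases l with _ | ⟨⟨x, c⟩, t⟩ <;> simp
  mul_assoc := fun ⟨a, l⟩ ⟨b, l'⟩ ⟨c, l''⟩ => by
    rcases l with _ | ⟨⟨x, d⟩, t⟩ <;> rcases l' with _ | ⟨⟨x', d'⟩, t'⟩ <;> simp [mul_assoc]

@[simp] theorem length_tail_mul (w w' : AdjoinLetters M L) :
    (w * w').tail.length = w.tail.length + w'.tail.length := by
  obtain ⟨a, _ | ⟨⟨x, c⟩, t⟩⟩ := w <;> obtain ⟨b, l⟩ := w' <;> simp; omega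

def of : M →* AdjoinLetters M L where
  toFun a := ⟨a, []⟩
  map_one' := rfl
  map_mul' _ _ := rfl

def letter (x : L) : AdjoinLetters M L := ⟨1, [(x, 1)]⟩

@[simp] theorem of_apply (a : M) : (of a : AdjoinLetters M L) = ⟨a, []⟩ := rfl

theorem letter_def (x : L) : (letter x : AdjoinLetters M L) = ⟨1, [(x, 1)]⟩ := rfl

@[simp] theorem tail_letter (x : L) : (letter x : AdjoinLetters M L).tail = [(x, 1)] := rfl

theorem mk_cons (a c : M) (x : L) (t : List (L × M)) :
    (⟨a, (x, c) :: t⟩ : AdjoinLetters M L) = ⟨a, t⟩ * letter x * of c := by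
  rcases t with _ | ⟨⟨x', d⟩, t⟩ <;> simp [letter_def]

variable {N : Type*} [Monoid N]

def evalTail (φ : M →* N) (g : L → N) : List (L × M) → N
  | [] => 1
  | (x, c) :: t => evalTail φ g t * (g x * φ c)

theorem evalTail_append (φ : M →* N) (g : L → N) (l l' : List (L × M)) :
    evalTail φ g (l ++ l') = evalTail φ g l' * evalTail φ g l := by
  induction l with
  | nil => simp [evalTail]
  | cons h t ih => simp [evalTail, ih, mul_assoc]

def lift (φ : M →* N) (g : L → N) : AdjoinLetters M L →* N where
  toFun w := φ w.head * evalTail φ g w.tail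
  map_one' := by simp [evalTail]
  map_mul' := fun ⟨a, l⟩ ⟨b, l'⟩ => by
    rcases l with _ | ⟨⟨x, c⟩, t⟩ <;> simp [evalTail, evalTail_append, mul_assoc]

@[simp] theorem lift_mk_nil (φ : M →* N) (g : L → N) (a : M) : lift φ g ⟨a, []⟩ = φ a := by
  simp [lift, evalTail]

@[simp] theorem lift_letter (φ : M →* N) (g : L → N) (x : L) : lift φ g (letter x) = g x := by
  simp [lift, evalTail, letter_def]

@[ext] theorem hom_ext {F G : AdjoinLetters M L →* N} (h : F.comp of = G.comp of)
    (hl : ∀ x, F (letter x) = G (letter x)) : F = G := by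
  ext ⟨a, l⟩
  induction l with
  | nil => exact DFunLike.congr_fun h a
  | cons xc t ih =>
    obtain ⟨x, c⟩ := xc
    rw [mk_cons, map_mul, map_mul, map_mul, map_mul, ih, hl]
    exact congrArg _ (DFunLike.congr_fun h c)

def ev (m : M) : AdjoinLetters M Unit →* M := lift (MonoidHom.id M) fun _ => m

def subst (m : M) (i : Bool) : AdjoinLetters M Bool →* AdjoinLetters M Unit :=
  lift of fun j => if j = i then letter () else of m

def rename (i : Bool) : AdjoinLetters M Unit →* AdjoinLetters M Bool :=
  lift of fun _ => letter i

@[simp] theorem ev_of (m a : M) : ev m (of a) = a := by simp [ev]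

theorem subst_comp_rename_self (m : M) (i : Bool) :
    (subst m i).comp (rename i) = MonoidHom.id _ := by
  ext <;> simp [subst, rename]

theorem subst_comp_rename_ne (m : M) {i j : Bool} (h : j ≠ i) :
    (subst m i).comp (rename j) = of.comp (ev m) := by
  ext <;> simp [subst, rename, ev, h]

theorem kernelPairSections_le_mrange (m : M) :
    kernelPairSections (ev m) of ≤ MonoidHom.mrange ((subst m true).prod (subst m false)) := by
  refine sup_le ?_ ?_
  · rintro _ ⟨w, rfl⟩
    exact ⟨rename true w, Prod.ext (DFunLike.congr_fun (subst_comp_rename_self m true) w)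
      (DFunLike.congr_fun (subst_comp_rename_ne m (by decide)) w)⟩
  · rintro _ ⟨w, rfl⟩
    exact ⟨rename false w, Prod.ext (DFunLike.congr_fun (subst_comp_rename_ne m (by decide)) w)
      (DFunLike.congr_fun (subst_comp_rename_self m false) w)⟩

theorem length_subst_add_length_subst (m : M) (w : AdjoinLetters M Bool) :
    (subst m true w).tail.length + (subst m false w).tail.length = w.tail.length := by
  obtain ⟨a, l⟩ := w
  induction l with
  | nil => simp [subst]
  | cons xc t ih =>
    obtain ⟨x, c⟩ := xc
    rw [mk_cons]
    cases x <;> simp [subst] at ih ⊢ <;> omega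

theorem isUnit_of_letter_mem_kernelPairSections (m : M)
    (h : (letter (), letter ()) ∈ kernelPairSections (ev m) of) : IsUnit m := by
  obtain ⟨⟨a, l⟩, hw⟩ := kernelPairSections_le_mrange m h
  simp only [MonoidHom.prod_apply, Prod.mk.injEq] at hw
  have hlen := length_subst_add_length_subst m ⟨a, l⟩
  rw [hw.1, hw.2] at hlen
  obtain ⟨⟨x₂, c₂⟩, ⟨x₁, c₁⟩, rfl⟩ := List.length_eq_two.mp (by simpa using hlen.symm)
  cases x₁ <;> cases x₂ <;> simp [subst, lift, evalTail, letter_def] at hw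
  case false.true =>
    obtain ⟨⟨h₁, rfl⟩, rfl, h₂⟩ := hw
    exact isUnit_iff_exists.mpr ⟨c₁, by simpa using h₁, by simpa using h₂⟩
  case true.false =>
    obtain ⟨⟨rfl, h₂⟩, h₁, rfl⟩ := hw
    exact isUnit_iff_exists.mpr ⟨c₁, by simpa using h₁, by simpa using h₂⟩

end AdjoinLetters

namespace MonCat

variable {W X Y A B : MonCat.{u}}

theorem jointlyStronglyEpi_iff (r : X ⟶ A) (s : Y ⟶ A) :
    JointlyStronglyEpi r s ↔ MonoidHom.mrange r.hom ⊔ MonoidHom.mrange s.hom = ⊤ := by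
  constructor
  · intro h
    set N := MonoidHom.mrange r.hom ⊔ MonoidHom.mrange s.hom
    have hm : IsIso (ofHom N.subtype) :=
      h _ (ConcreteCategory.mono_of_injective _ Subtype.val_injective)
        ⟨ofHom (r.hom.codRestrict N fun x => Submonoid.mem_sup_left ⟨x, rfl⟩), rfl⟩
        ⟨ofHom (s.hom.codRestrict N fun y => Submonoid.mem_sup_right ⟨y, rfl⟩), rfl⟩
    refine eq_top_iff.2 fun a _ => ?_
    obtain ⟨n, rfl⟩ := ((ConcreteCategory.isIso_iff_bijective _).1 hm).2 a
    exact n.2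
  · rintro h N m hm ⟨r', rfl⟩ ⟨s', rfl⟩
    refine (ConcreteCategory.isIso_iff_bijective m).2
      ⟨ConcreteCategory.injective_of_mono_of_preservesPullback m, fun a => ?_⟩
    have hle : MonoidHom.mrange (r' ≫ m).hom ⊔ MonoidHom.mrange (s' ≫ m).hom ≤
        MonoidHom.mrange m.hom :=
      sup_le (by rintro _ ⟨x, rfl⟩; exact ⟨r' x, rfl⟩) (by rintro _ ⟨y, rfl⟩; exact ⟨s' y, rfl⟩)
    exact hle (h ▸ Submonoid.mem_top a)

section Pullback

variable (f : A ⟶ B) (g : X ⟶ B)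

noncomputable def pullbackToProd : ↑(pullback f g) →* ↑A × ↑X :=
  (pullback.fst f g).hom.prod (pullback.snd f g).hom

theorem pullbackToProd_injective : Function.Injective (pullbackToProd f g) := by
  intro p q hpq
  obtain ⟨a, x, h, rfl⟩ := Concrete.pullbackMk_surjective f g p
  obtain ⟨a', x', h', rfl⟩ := Concrete.pullbackMk_surjective f g q
  simp only [pullbackToProd, MonoidHom.prod_apply, Prod.mk.injEq, Concrete.pullbackMk_fst,
    Concrete.pullbackMk_snd] at hpq
  obtain ⟨rfl, rfl⟩ := hpq
  rfl

theorem exists_pullbackToProd_eq {a : A} {x : X} (h : f a = g x) :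
    ∃ p, pullbackToProd f g p = (a, x) :=
  ⟨Concrete.pullbackMk f g a x h, by simp [pullbackToProd]⟩

theorem pullback_condition_apply (p : ↑(pullback f g)) :
    f (pullback.fst f g p) = g (pullback.snd f g p) :=
  ConcreteCategory.congr_hom pullback.condition p

@[simp] theorem pullbackToProd_lift (h : W ⟶ A) (k : W ⟶ X) (w : h ≫ f = k ≫ g) (x : W) :
    pullbackToProd f g (pullback.lift h k w x) = (h x, k x) :=
  Prod.ext (ConcreteCategory.congr_hom (pullback.lift_fst h k w) x)
    (ConcreteCategory.congr_hom (pullback.lift_snd h k w) x)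

theorem mem_kernelPairSections_of_sup_eq_top (s : B ⟶ A) (r : X ⟶ pullback f f)
    (r' : Y ⟶ pullback f f) (h : MonoidHom.mrange r.hom ⊔ MonoidHom.mrange r'.hom = ⊤)
    (hr : ∀ x, pullbackToProd f f (r x) ∈ kernelPairSections f.hom s.hom)
    (hr' : ∀ y, pullbackToProd f f (r' y) ∈ kernelPairSections f.hom s.hom)
    {a b : A} (hab : f a = f b) : (a, b) ∈ kernelPairSections f.hom s.hom := by
  obtain ⟨p, hp⟩ := exists_pullbackToProd_eq f f hab
  have hmem := Submonoid.mem_map_of_mem (pullbackToProd f f) (h ▸ Submonoid.mem_top p)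
  rw [Submonoid.map_sup, MonoidHom.map_mrange, MonoidHom.map_mrange, hp] at hmem
  have hle : MonoidHom.mrange ((pullbackToProd f f).comp r.hom) ⊔
      MonoidHom.mrange ((pullbackToProd f f).comp r'.hom) ≤ kernelPairSections f.hom s.hom :=
    sup_le (by rintro _ ⟨x, rfl⟩; exact hr x) (by rintro _ ⟨y, rfl⟩; exact hr' y)
  exact hle hmem

end Pullback

theorem isMaltsevObject_of_forall_isUnit (hY : ∀ y : Y, IsUnit y) : IsMaltsevObject Y := by
  intro A X f s g t hs ht
  rw [jointlyStronglyEpi_iff, eq_top_iff]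
  rintro p -
  set a := pullback.fst f g p
  set x := pullback.snd f g p
  obtain ⟨u, hu⟩ := hY (f a)
  have hgt : ∀ y, g (t y) = y := fun y => by simpa using ConcreteCategory.congr_hom ht y
  have hgx : g x = u := by rw [hu]; exact (pullback_condition_apply f g p).symm
  have hp : p = pullback.lift (𝟙 A) (f ≫ t) (by simp [ht]) a *
      pullback.lift (g ≫ s) (𝟙 X) (by simp [hs]) (t ↑u⁻¹ * x) := by
    apply pullbackToProd_injective
    rw [map_mul, pullbackToProd_lift, pullbackToProd_lift]
    refine Prod.ext ?_ ?_
    · show a = a * s (g (t ↑u⁻¹ * x))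
      rw [map_mul, hgt, hgx, Units.inv_mul, map_one, mul_one]
    · show x = t (f a) * (t ↑u⁻¹ * x)
      rw [← mul_assoc, ← map_mul, ← hu, Units.mul_inv, map_one, one_mul]
  rw [hp]
  exact mul_mem (Submonoid.mem_sup_left ⟨a, rfl⟩) (Submonoid.mem_sup_right ⟨_, rfl⟩)

theorem isProtomodularObject_of_forall_isUnit (hY : ∀ y : Y, IsUnit y) :
    IsProtomodularObject Y := by
  intro A f s hs X g W h
  rw [jointlyStronglyEpi_iff, eq_top_iff]
  rintro p -
  set x := pullback.fst g f p
  set a := pullback.snd g f p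
  obtain ⟨u, hu⟩ := hY (f a)
  have hfs : ∀ y, f (s y) = y := fun y => by simpa using ConcreteCategory.congr_hom hs y
  have hgx : g x = u := by rw [hu]; exact pullback_condition_apply g f p
  have hk : g 1 = f (a * s ↑u⁻¹) := by rw [map_one, map_mul, hfs, ← hu, Units.mul_inv]
  set k := Concrete.pullbackMk g f 1 (a * s ↑u⁻¹) hk
  have hk_mem : k ∈ MonoidHom.mrange (pullback.snd h (pullback.fst g f)).hom :=
    ⟨Concrete.pullbackMk h (pullback.fst g f) 1 k (by simp [k]), by simp⟩
  have hp : p = k * pullback.lift (𝟙 X) (g ≫ s) (by simp [hs]) x := by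
    apply pullbackToProd_injective
    rw [map_mul, pullbackToProd_lift]
    refine Prod.ext ?_ ?_
    · show x = pullback.fst g f k * x
      simp [k]
    · show a = pullback.snd g f k * s (g x)
      rw [Concrete.pullbackMk_snd, mul_assoc, ← map_mul, hgx, Units.inv_mul, map_one, mul_one]
  rw [hp]
  exact mul_mem (Submonoid.mem_sup_left hk_mem) (Submonoid.mem_sup_right ⟨x, rfl⟩)

theorem ofHom_of_comp_ofHom_ev (m : Y) :
    ofHom (AdjoinLetters.of : Y →* AdjoinLetters Y Unit) ≫ ofHom (AdjoinLetters.ev m) = 𝟙 Y :=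
  hom_ext (MonoidHom.ext (AdjoinLetters.ev_of m))

theorem forall_isUnit_of_isMaltsevObject (h : IsMaltsevObject Y) (m : Y) : IsUnit m := by
  have hs := ofHom_of_comp_ofHom_ev m
  apply AdjoinLetters.isUnit_of_letter_mem_kernelPairSections m
  refine mem_kernelPairSections_of_sup_eq_top _ _ _ _
    ((jointlyStronglyEpi_iff _ _).1 (h _ _ _ _ hs hs)) ?_ ?_ rfl
  · exact fun a => Submonoid.mem_sup_left ⟨a, by rw [pullbackToProd_lift]; rfl⟩
  · exact fun a => Submonoid.mem_sup_right ⟨a, by rw [pullbackToProd_lift]; rfl⟩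

theorem forall_isUnit_of_isProtomodularObject (h : IsProtomodularObject Y) (m : Y) :
    IsUnit m := by
  set f : of (AdjoinLetters Y Unit) ⟶ Y := ofHom (AdjoinLetters.ev m)
  set s : Y ⟶ of (AdjoinLetters Y Unit) := ofHom AdjoinLetters.of
  have hs : s ≫ f = 𝟙 Y := ofHom_of_comp_ofHom_ev m
  have hfs : ∀ y, f (s y) = y := fun y => by simpa using ConcreteCategory.congr_hom hs y
  apply AdjoinLetters.isUnit_of_letter_mem_kernelPairSections m
  -- Pulling the point back along `f` and testing against `f ≫ s` lands in the kernel pair of `f`,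
  -- where the pullback along `f ≫ s` contributes exactly the pairs `(s (f b), b)`.
  refine mem_kernelPairSections_of_sup_eq_top _ _ _ _
    ((jointlyStronglyEpi_iff _ _).1 (h f s hs f (f ≫ s))) ?_ ?_ rfl
  · intro q
    set p := pullback.snd (f ≫ s) (pullback.fst f f) q
    have h₁ := pullback_condition_apply (f ≫ s) (pullback.fst f f) q
    have h₂ := pullback_condition_apply f f p
    have hp : s (f (pullback.snd f f p)) = pullback.fst f f p := by
      rw [← h₂, ← h₁, ConcreteCategory.comp_apply, hfs]
    exact Submonoid.mem_sup_right ⟨pullback.snd f f p, Prod.ext hp rfl⟩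
  · exact fun a => Submonoid.mem_sup_left ⟨a, by rw [pullbackToProd_lift]; rfl⟩

end MonCat

/-- For a monoid `M`, TFAE: (i) every element of `M` is invertible (`M` is a
group); (ii) `M` is a Mal'tsev object of `Mon`; (iii) `M` is a protomodular
object of `Mon`. -/
theorem statement0 (M : Type) [Monoid M] :
    List.TFAE [∀ m : M, IsUnit m,
      IsMaltsevObject (MonCat.of M),
      IsProtomodularObject (MonCat.of M)] := by
  tfae_have 1 → 2 := MonCat.isMaltsevObject_of_forall_isUnit (Y := MonCat.of M)
  tfae_have 2 → 1 := MonCat.forall_isUnit_of_isMaltsevObject (Y := MonCat.of M)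
  tfae_have 1 → 3 := MonCat.isProtomodularObject_of_forall_isUnit (Y := MonCat.of M)
  tfae_have 3 → 1 := MonCat.forall_isUnit_of_isProtomodularObject (Y := MonCat.of M)
  tfae_finish
end

section
/- In a regular category, stably strong points are closed under quotients: given points (f : A → B, s : B → A) and (f' : A' → B', s' : B' → A') together with regular epimorphisms α : A → A' and β : B → B' such that f' ∘ α = β ∘ f and α ∘ s = s' ∘ β, if (f, s) is a stably strong point then (f', s') is a stably strong point. -/
open CategoryTheory CategoryTheory.Limits

universe v u

variable {C : Type u} [Category.{v} C]

/-!
Fix `g : X ⟶ B'` and pull the point `(f, s)` back along `pullback.fst β g : B ×_{B'} X ⟶ B`.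
The canonical comparison from this point to the pullback of `(f', s')` along `g` is a morphism
of points whose top component is a pullback of `α`, hence a strong epimorphism. Strong points
are preserved by such morphisms: a monomorphism through which the two legs downstairs factor
pulls back along the strong epimorphism to one through which the legs upstairs factor; that
pullback is then invertible, so the strong epimorphism factors through the monomorphism.
-/

theorem JointlyStronglyEpi.of_strongEpi [HasPullbacks C] {P Q X Y X' Y' : C}
    {r : X ⟶ P} {s : Y ⟶ P} (h : JointlyStronglyEpi r s) (κ : P ⟶ Q) [StrongEpi κ]
    {r' : X' ⟶ Q} {s' : Y' ⟶ Q} (x : X ⟶ X') (hx : x ≫ r' = r ≫ κ)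
    (y : Y ⟶ Y') (hy : y ≫ s' = s ≫ κ) : JointlyStronglyEpi r' s' := by
  rintro M m hm ⟨u, hu⟩ ⟨v, hv⟩
  have : IsIso (pullback.fst κ m) :=
    h _ pullback.fst_of_mono ⟨pullback.lift r (x ≫ u) (by simp [hu, hx]), pullback.lift_fst ..⟩
      ⟨pullback.lift s (y ≫ v) (by simp [hv, hy]), pullback.lift_fst ..⟩
  have : StrongEpi ((inv (pullback.fst κ m) ≫ pullback.snd κ m) ≫ m) := by
    simpa [← pullback.condition]
  have := strongEpi_of_strongEpi (inv (pullback.fst κ m) ≫ pullback.snd κ m) m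
  exact isIso_of_mono_of_strongEpi m

theorem IsStrongPoint.of_strongEpi [HasPullbacks C] {A₁ X₁ A₂ X₂ : C}
    {f₁ : A₁ ⟶ X₁} {s₁ : X₁ ⟶ A₁} {f₂ : A₂ ⟶ X₂} {s₂ : X₂ ⟶ A₂} (h : IsStrongPoint f₁ s₁)
    (κ : A₁ ⟶ A₂) [StrongEpi κ] (q : X₁ ⟶ X₂) (hf : κ ≫ f₂ = f₁ ≫ q)
    (hs : s₁ ≫ κ = q ≫ s₂) : IsStrongPoint f₂ s₂ := fun _ k ↦
  (h (pullback.snd k q)).of_strongEpi κ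
    (pullback.map _ _ _ _ (pullback.fst k q) κ q pullback.condition.symm hf.symm)
    (pullback.lift_snd ..) q hs.symm

theorem CategoryTheory.IsPullback.strongEpi_snd {P X Y Z : C}
    {fst : P ⟶ X} {snd : P ⟶ Y} {f : X ⟶ Z} {g : Y ⟶ Z} [HasPullback f g]
    (sq : IsPullback fst snd f g) (hf : _root_.IsRegularEpi (pullback.snd f g)) : StrongEpi snd := by
  have := isRegularEpi_of_regularEpi hf.some
  rw [← sq.isoPullback_hom_snd]
  infer_instance

theorem isPullback_snd_map_pullback_fst [HasPullbacks C] {A B A' B' X : C}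
    {f : A ⟶ B} {f' : A' ⟶ B'} {α : A ⟶ A'} {β : B ⟶ B'} (w : α ≫ f' = f ≫ β) (g : X ⟶ B') :
    IsPullback (pullback.snd (pullback.fst β g) f)
      (pullback.map _ _ g f' (pullback.snd β g) α β pullback.condition w.symm)
      α (pullback.snd g f') := by
  have outer := (IsPullback.of_hasPullback (pullback.fst β g) f).flip.paste_vert
    (IsPullback.of_hasPullback β g)
  rw [← w] at outer
  refine IsPullback.of_bot ?_ (pullback.lift_snd ..).symm (IsPullback.of_hasPullback g f').flip
  rwa [pullback.lift_fst]

theorem statement6_general [HasFiniteLimits C]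
    (hstab : ∀ {X Y Z : C} (f : X ⟶ Z) (g : Y ⟶ Z),
      _root_.IsRegularEpi f → _root_.IsRegularEpi (pullback.snd f g))
    {A B A' B' : C}
    (f : A ⟶ B) (s : B ⟶ A) (hs : s ≫ f = 𝟙 B)
    (f' : A' ⟶ B') (s' : B' ⟶ A') (hs' : s' ≫ f' = 𝟙 B')
    (α : A ⟶ A') (β : B ⟶ B') (hα : _root_.IsRegularEpi α)
    (w1 : α ≫ f' = f ≫ β) (w2 : s ≫ α = β ≫ s')
    (h : IsStablyStrongPoint f s hs) :
    IsStablyStrongPoint f' s' hs' := by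
  intro X g
  let κ := pullback.map _ _ g f' (pullback.snd β g) α β pullback.condition w1.symm
  have : StrongEpi κ := (isPullback_snd_map_pullback_fst w1 g).strongEpi_snd (hstab α _ hα)
  exact (h (pullback.fst β g)).of_strongEpi κ (pullback.snd β g) (pullback.lift_fst ..)
    (by ext <;> simp [κ, pullback.lift_fst, pullback.lift_fst_assoc, pullback.lift_snd,
      pullback.lift_snd_assoc, w2, pullback.condition_assoc])

/-- In a regular category, stably strong points are closed under quotients. -/
theorem statement6 [HasFiniteLimits C]
    (hcoeq : ∀ {X Y : C} (f : X ⟶ Y),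
      HasCoequalizer (pullback.fst f f) (pullback.snd f f))
    (hstab : ∀ {X Y Z : C} (f : X ⟶ Z) (g : Y ⟶ Z),
      _root_.IsRegularEpi f → _root_.IsRegularEpi (pullback.snd f g))
    {A B A' B' : C}
    (f : A ⟶ B) (s : B ⟶ A) (hs : s ≫ f = 𝟙 B)
    (f' : A' ⟶ B') (s' : B' ⟶ A') (hs' : s' ≫ f' = 𝟙 B')
    (α : A ⟶ A') (β : B ⟶ B') (hα : _root_.IsRegularEpi α) (hβ : _root_.IsRegularEpi β)
    (w1 : α ≫ f' = f ≫ β) (w2 : s ≫ α = β ≫ s')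
    (h : IsStablyStrongPoint f s hs) :
    IsStablyStrongPoint f' s' hs' :=
  statement6_general hstab f s hs f' s' hs' α β hα w1 w2 h
end

section
/- A pointed regular category C is subtractive, meaning that every reflexive relation ⟨r₁, r₂⟩ : R → X × X which is right punctual is also left punctual, if and only if every object of C is a subtractive object. -/
open CategoryTheory CategoryTheory.Limits

universe v u

variable {C : Type u} [Category.{v} C]

/-!
In a regular category every morphism factors as a regular epimorphism followed by a monomorphism,
and every strong epimorphism is regular.

If every object is subtractive, apply subtractivity of `X` to the span `(d, r₁, r₂, p)` of a
right punctual reflexive relation `⟨r₁, r₂⟩ : R ↪ X × X`: the pairs `(x, 0)` of `R` cover `X`,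
and since `R ↪ X × X` is mono, the diagonal fill-in factors `⟨1, 0⟩` through `R`.

Conversely, given a split right punctual span `(s, f, g, t)`, let `I ↪ X × Y` be the image of
`⟨f, g⟩` and `R` the relation on `Z` with `z R z'` iff `(f z, g z') ∈ I`. It is reflexive and right
punctual, hence left punctual: `(f z, 0) ∈ I` for every `z`. So `I ∩ (X × 0) → X` is split by `s`,
and `Ker g`, which covers `I ∩ (X × 0)`, is sent onto `X` by `f`.
-/

attribute [local simp] prod.lift_fst prod.lift_snd pullback.lift_fst pullback.lift_snd

theorem regular_of_hasCoequalizer_of_isRegularEpi_pullback_snd [HasFiniteLimits C]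
    (hcoeq : ∀ {X Y : C} (f : X ⟶ Y), HasCoequalizer (pullback.fst f f) (pullback.snd f f))
    (hstab : ∀ {X Y Z : C} (f : X ⟶ Z) (g : Y ⟶ Z),
      _root_.IsRegularEpi f → _root_.IsRegularEpi (pullback.snd f g)) :
    Regular C where
  hasCoequalizer_of_isKernelPair {_ _ _ f g₁ g₂} h :=
    have := hcoeq f
    hasColimit_of_iso <| parallelPairIso g₁ g₂ (pullback.fst f f) (pullback.snd f f)
      h.isoPullback (Iso.refl _) (by simp) (by simp)
  regularEpiIsStableUnderBaseChange := .mk' fun _ _ _ f g _ hg => by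
    rw [← pullbackSymmetry_hom_comp_snd]
    exact MorphismProperty.RespectsIso.precomp _ _ _ ⟨hstab g f hg.1⟩

variable (C) in
def IsSubtractiveCategory [HasZeroMorphisms C] [HasBinaryProducts C] : Prop :=
  ∀ ⦃X R : C⦄ (r : R ⟶ X ⨯ X), Mono r →
    (∃ d : X ⟶ R, d ≫ r = prod.lift (𝟙 X) (𝟙 X)) →
    (∃ p : X ⟶ R, p ≫ r = prod.lift 0 (𝟙 X)) →
    (∃ q : X ⟶ R, q ≫ r = prod.lift (𝟙 X) 0)

section

variable [HasZeroMorphisms C]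

theorem SubtractiveObject.exists_comp_eq_prod_lift_id_zero [HasKernels C] [HasBinaryProducts C]
    {X R : C} (hX : SubtractiveObject X) (r : R ⟶ X ⨯ X) [Mono r] {d p : X ⟶ R}
    (hd : d ≫ r = prod.lift (𝟙 X) (𝟙 X)) (hp : p ≫ r = prod.lift 0 (𝟙 X)) :
    ∃ q : X ⟶ R, q ≫ r = prod.lift (𝟙 X) 0 := by
  obtain ⟨hreg⟩ := hX d (r ≫ prod.fst) (r ≫ prod.snd) p
    (by simp [reassoc_of% hd]) (by simp [reassoc_of% hp]) (by simp [reassoc_of% hp])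
  have := isRegularEpi_of_regularEpi hreg
  have sq : CommSq (kernel.ι (r ≫ prod.snd)) (kernel.ι (r ≫ prod.snd) ≫ r ≫ prod.fst) r
      (prod.lift (𝟙 X) 0) := ⟨by ext <;> simp⟩
  exact ⟨sq.lift, sq.fac_right⟩

theorem isSubtractiveCategory_of_forall_subtractiveObject [HasKernels C] [HasBinaryProducts C]
    (h : ∀ Y : C, SubtractiveObject Y) : IsSubtractiveCategory C :=
  fun X _ r _ ⟨_, hd⟩ ⟨_, hp⟩ => (h X).exists_comp_eq_prod_lift_id_zero r hd hp

variable [Regular C]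

theorem strongEpi_kernel_ι_comp_of_isRegularEpi {Z I X Y : C} (e : Z ⟶ I)
    [CategoryTheory.IsRegularEpi e] (h : I ⟶ X) (k : I ⟶ Y) [StrongEpi (kernel.ι k ≫ h)] :
    StrongEpi (kernel.ι (e ≫ k) ≫ e ≫ h) := by
  -- the pullback of `e` along `kernel.ι k`, a regular epimorphism onto `Ker k`, lands in `Ker (e ≫ k)`
  have hw : pullback.fst e (kernel.ι k) ≫ e ≫ k = 0 := by
    rw [pullback.condition_assoc, kernel.condition, comp_zero]
  have hfac : kernel.lift _ _ hw ≫ kernel.ι (e ≫ k) ≫ e ≫ h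
      = pullback.snd e (kernel.ι k) ≫ kernel.ι k ≫ h := by
    rw [kernel.lift_ι_assoc, pullback.condition_assoc]
  have : StrongEpi (kernel.lift _ _ hw ≫ kernel.ι (e ≫ k) ≫ e ≫ h) := by
    rw [hfac]; infer_instance
  exact strongEpi_of_strongEpi (kernel.lift _ _ hw) _

theorem IsSubtractiveCategory.subtractiveObject (hC : IsSubtractiveCategory C) (Y : C) :
    SubtractiveObject Y := by
  intro X Z s f g t hs ht htf
  let F := Regular.strongEpiMonoFactorisation (prod.lift f g)
  have hf : F.e ≫ F.m ≫ prod.fst = f := by simp [F.fac_assoc]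
  have hg : F.e ≫ F.m ≫ prod.snd = g := by simp [F.fac_assoc]
  obtain ⟨q, hq⟩ := hC (pullback.fst (prod.map f g) F.m) inferInstance
    ⟨pullback.lift (prod.lift (𝟙 Z) (𝟙 Z)) F.e (by ext <;> simp), by simp⟩
    ⟨pullback.lift (prod.lift 0 (𝟙 Z)) (g ≫ t ≫ F.e) (by ext <;> simp [htf, ht]), by simp⟩
  let u := q ≫ pullback.snd _ _
  have hu : u ≫ F.m = prod.lift f 0 := by
    rw [Category.assoc, ← pullback.condition, reassoc_of% hq]; ext <;> simp
  have hu₀ : u ≫ F.m ≫ prod.snd = 0 := by simp [reassoc_of% hu]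
  have : IsSplitEpi (kernel.ι (F.m ≫ prod.snd) ≫ F.m ≫ prod.fst) :=
    IsSplitEpi.mk' ⟨s ≫ kernel.lift _ u hu₀, by simp [reassoc_of% hu, hs]⟩
  have := strongEpi_kernel_ι_comp_of_isRegularEpi F.e (F.m ≫ prod.fst) (F.m ≫ prod.snd)
  rw [hf, hg] at this
  exact ⟨Regular.regularEpiOfExtremalEpi _⟩

end

theorem statement13_general [HasFiniteLimits C] [HasZeroMorphisms C]
    (hcoeq : ∀ {X Y : C} (f : X ⟶ Y),
      HasCoequalizer (pullback.fst f f) (pullback.snd f f))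
    (hstab : ∀ {X Y Z : C} (f : X ⟶ Z) (g : Y ⟶ Z),
      _root_.IsRegularEpi f → _root_.IsRegularEpi (pullback.snd f g)) :
    (∀ ⦃X R : C⦄ (r : R ⟶ X ⨯ X), Mono r →
      (∃ d : X ⟶ R, d ≫ r = prod.lift (𝟙 X) (𝟙 X)) →
      (∃ p : X ⟶ R, p ≫ r = prod.lift 0 (𝟙 X)) →
      (∃ q : X ⟶ R, q ≫ r = prod.lift (𝟙 X) 0)) ↔
    (∀ Y : C, SubtractiveObject Y) := by
  have := regular_of_hasCoequalizer_of_isRegularEpi_pullback_snd hcoeq hstab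
  exact ⟨IsSubtractiveCategory.subtractiveObject, isSubtractiveCategory_of_forall_subtractiveObject⟩

/-- A pointed regular category is subtractive (every right punctual reflexive
relation is left punctual) iff every object is a subtractive object. -/
theorem statement13 [HasFiniteLimits C] [HasZeroObject C] [HasZeroMorphisms C]
    (hcoeq : ∀ {X Y : C} (f : X ⟶ Y),
      HasCoequalizer (pullback.fst f f) (pullback.snd f f))
    (hstab : ∀ {X Y Z : C} (f : X ⟶ Z) (g : Y ⟶ Z),
      _root_.IsRegularEpi f → _root_.IsRegularEpi (pullback.snd f g)) :
    (∀ ⦃X R : C⦄ (r : R ⟶ X ⨯ X), Mono r →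
      (∃ d : X ⟶ R, d ≫ r = prod.lift (𝟙 X) (𝟙 X)) →
      (∃ p : X ⟶ R, p ≫ r = prod.lift 0 (𝟙 X)) →
      (∃ q : X ⟶ R, q ≫ r = prod.lift (𝟙 X) 0)) ↔
    (∀ Y : C, SubtractiveObject Y) :=
  statement13_general hcoeq hstab
end

section
/- In a finitely complete category, every protomodular object is a Mal'tsev object. -/
/-!
Given points `(f, s)` and `(g, t)` over `Y`, pull `(g, t)` back along `f` to the point
`(π_A, ⟨1, t f⟩)` over `A`. It is strong, so pulling it further along `s` yields a projection
into `A ×_Y X` that, together with `⟨1, t f⟩`, is jointly strongly epimorphic. That projection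
factors through `⟨s g, 1⟩`, so the Mal'tsev pair is jointly strongly epimorphic as well.
-/

open CategoryTheory CategoryTheory.Limits

universe v u

variable {C : Type u} [Category.{v} C]

theorem JointlyStronglyEpi.of_factors {X Y X' Y' A : C} {r : X ⟶ A} {s : Y ⟶ A}
    (h : JointlyStronglyEpi r s) {r₂ : X' ⟶ A} {s₂ : Y' ⟶ A}
    (hr : ∃ u : X ⟶ X', u ≫ r₂ = r) (hs : ∃ v : Y ⟶ Y', v ≫ s₂ = s) :
    JointlyStronglyEpi r₂ s₂ := by
  intro M m hm ⟨r', hr'⟩ ⟨s', hs'⟩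
  obtain ⟨u, rfl⟩ := hr
  obtain ⟨v, rfl⟩ := hs
  exact h m hm ⟨u ≫ r', by rw [Category.assoc, hr']⟩ ⟨v ≫ s', by rw [Category.assoc, hs']⟩

theorem JointlyStronglyEpi.symm {X Y A : C} {r : X ⟶ A} {s : Y ⟶ A}
    (h : JointlyStronglyEpi r s) : JointlyStronglyEpi s r :=
  fun _ m hm hr hs => h m hm hs hr

/-- In elements: `(y, (a, x))` in `Y ×_A (A ×_Y X)` has `a = s y` and `y = f a = g x`,
so `(a, x) = (s (g x), x)`. -/
theorem pullback_snd_pullback_fst_eq [HasPullbacks C] {Y A X : C} {f : A ⟶ Y} {s : Y ⟶ A}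
    (g : X ⟶ Y) (hs : s ≫ f = 𝟙 Y) :
    pullback.snd s (pullback.fst f g) =
      (pullback.snd s (pullback.fst f g) ≫ pullback.snd f g) ≫
        pullback.lift (g ≫ s) (𝟙 X) (by simp [hs]) := by
  apply pullback.hom_ext
  · rw [Category.assoc, pullback.lift_fst, ← pullback.condition, Category.assoc,
      ← pullback.condition_assoc, ← pullback.condition_assoc, reassoc_of% hs]
  · rw [Category.assoc, pullback.lift_snd, Category.comp_id]

/-- In a finitely complete category, every protomodular object is a Mal'tsev
object. -/
theorem statement19 [HasFiniteLimits C] (Y : C)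
    (h : IsProtomodularObject Y) : IsMaltsevObject Y := by
  intro A X f s g t hs ht
  have hstrong := h g t ht f s
  exact hstrong.symm.of_factors ⟨𝟙 A, Category.id_comp _⟩
    ⟨_, (pullback_snd_pullback_fst_eq g hs).symm⟩
end
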